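/- arXiv:1712.04396 — 5 statements merged into one kernel-verified Lean document; each statement's English description precedes it below -/
import Mathlib

section
/- Let q ∈ (0,1), κ > 0, and let d ≥ 0 be a real number such that ⌈d⌉ > 2κ + 1 and ⌈d⌉ ≥ (2κ/q)·log(κ/q). Set D = (1−q)·d and α = exp(−(1−q)·(⌈d⌉ − d)). Then exp(−1) < exp(−(1−q)) < α ≤ 1, and (⌈d⌉ : ℝ)^κ · exp(−⌈d⌉) ≤ α · exp(−D). -/
/-!
Writing `c = ⌈d⌉`, the ceiling gap `c - d ∈ [0, 1)` gives the bounds on `α`, and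
`α · exp (-D) = exp (-(1 - q) c)`, so the last inequality is `κ log c ≤ q c`. Splitting
`log c = log (c q / κ) + log (κ / q)`, the first term is at most `c q / (2κ)` by `2 log x ≤ x`, and
the second is at most `c q / (2κ)` by the largeness assumption on `c`.
-/

open Real

lemma Real.log_le_half_self {x : ℝ} (hx : 0 ≤ x) : log x ≤ x / 2 := by
  rcases hx.eq_or_lt with rfl | hx
  · simp
  · have := two_mul_le_exp (x := log x)
    rw [exp_log hx] at this
    linarith

lemma Real.mul_log_le_mul_self {κ q c : ℝ} (hκ : 0 < κ) (hq : 0 < q) (hc : 0 < c)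
    (hlarge : 2 * κ / q * log (κ / q) ≤ c) : κ * log c ≤ q * c := by
  have hsplit : log c = log (c * q / κ) + log (κ / q) := by
    rw [← log_mul (by positivity) (by positivity)]
    congr 1
    field_simp
  have hfirst : κ * log (c * q / κ) ≤ q * c / 2 := by
    calc κ * log (c * q / κ) ≤ κ * (c * q / κ / 2) :=
          mul_le_mul_of_nonneg_left (log_le_half_self (by positivity)) hκ.le
      _ = q * c / 2 := by field_simp
  have hsecond : κ * log (κ / q) ≤ q * c / 2 := by
    rw [div_mul_eq_mul_div, div_le_iff₀ hq] at hlarge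
    linarith
  rw [hsplit]
  linarith

lemma Real.rpow_mul_exp_neg_le {κ q c : ℝ} (hc : 0 < c) (h : κ * log c ≤ q * c) :
    c ^ κ * exp (-c) ≤ exp (-(1 - q) * c) := by
  rw [rpow_def_of_pos hc, ← exp_add, exp_le_exp]
  linarith

theorem scale_distance_bound_general
    (q κ d : ℝ) (hq0 : 0 < q) (hq1 : q < 1) (hκ : 0 < κ)
    (hlarge1 : (⌈d⌉ : ℝ) > 2 * κ + 1)
    (hlarge2 : (⌈d⌉ : ℝ) ≥ (2 * κ / q) * Real.log (κ / q))
    (D α : ℝ) (hD : D = (1 - q) * d)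
    (hα : α = Real.exp (-(1 - q) * ((⌈d⌉ : ℝ) - d))) :
    Real.exp (-1) < Real.exp (-(1 - q)) ∧
    Real.exp (-(1 - q)) < α ∧
    α ≤ 1 ∧
    (⌈d⌉ : ℝ) ^ κ * Real.exp (-(⌈d⌉ : ℝ)) ≤ α * Real.exp (-D) := by
  have hgap_nonneg : 0 ≤ (⌈d⌉ : ℝ) - d := sub_nonneg.mpr (Int.le_ceil d)
  have hgap_lt_one : (⌈d⌉ : ℝ) - d < 1 := by linarith [Int.ceil_lt_add_one d]
  have hαD : α * exp (-D) = exp (-(1 - q) * ⌈d⌉) := by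
    rw [hα, hD, ← exp_add]
    ring_nf
  subst hα
  refine ⟨exp_lt_exp.mpr (by linarith), exp_lt_exp.mpr (by nlinarith), ?_, ?_⟩
  · exact exp_le_one_iff.mpr (by nlinarith)
  · rw [hαD]
    exact rpow_mul_exp_neg_le (by linarith) (mul_log_le_mul_self hκ hq0 (by linarith) hlarge2)

theorem scale_distance_bound
    (q κ d : ℝ) (hq0 : 0 < q) (hq1 : q < 1) (hκ : 0 < κ) (hd : 0 ≤ d)
    (hlarge1 : (⌈d⌉ : ℝ) > 2 * κ + 1)
    (hlarge2 : (⌈d⌉ : ℝ) ≥ (2 * κ / q) * Real.log (κ / q))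
    (D α : ℝ) (hD : D = (1 - q) * d)
    (hα : α = Real.exp (-(1 - q) * ((⌈d⌉ : ℝ) - d))) :
    Real.exp (-1) < Real.exp (-(1 - q)) ∧
    Real.exp (-(1 - q)) < α ∧
    α ≤ 1 ∧
    (⌈d⌉ : ℝ) ^ κ * Real.exp (-(⌈d⌉ : ℝ)) ≤ α * Real.exp (-D) :=
  scale_distance_bound_general q κ d hq0 hq1 hκ hlarge1 hlarge2 D α hD hα
end

section
/- Let 𝓗 be a nonzero finite-dimensional complex inner product space and let G be a self-adjoint linear endomorphism of 𝓗. Let E₀ be the smallest eigenvalue of G, assume its eigenspace is one-dimensional and spanned by a unit vector ψ, and let E₁ be the smallest eigenvalue of G distinct from E₀, with E₁ > E₀. Let ρ be a positive semidefinite linear endomorphism of 𝓗 with trace 1. Then 1 − ⟨ψ, ρψ⟩ ≤ (Tr(ρ∘G) − E₀)/(E₁ − E₀), and moreover Tr(ρ∘G) − E₀ ≤ ‖ρ − P_ψ‖₁ · ‖G‖, where P_ψ is the orthogonal projection onto span(ψ); hence (Tr(ρ∘G) − E₀)/(E₁ − E₀) ≤ ‖ρ − P_ψ‖₁·‖G‖/(E₁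 − E₀). -/
open scoped ComplexOrder

noncomputable section

variable {𝓗 : Type*} [NormedAddCommGroup 𝓗] [InnerProductSpace ℂ 𝓗] [FiniteDimensional ℂ 𝓗]

/-- The operator norm of a linear endomorphism of a finite-dimensional complex
inner product space. -/
def endOpNorm (T : 𝓗 →ₗ[ℂ] 𝓗) : ℝ := ‖LinearMap.toContinuousLinearMap T‖

/-- The square root of a positive semidefinite matrix, as `Matrix.PosSemidef.sqrt`
was defined in Mathlib of December 2024 (removed since). -/
def Matrix.PosSemidef.sqrtOld {n 𝕜 : Type*} [Fintype n] [DecidableEq n] [RCLike 𝕜]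
    {A : Matrix n n 𝕜} (hA : A.PosSemidef) : Matrix n n 𝕜 :=
  hA.1.eigenvectorUnitary.1 * Matrix.diagonal ((↑) ∘ (√·) ∘ hA.1.eigenvalues) *
    (star hA.1.eigenvectorUnitary : Matrix n n 𝕜)

/-- The trace norm (sum of singular values) of a linear endomorphism of a
finite-dimensional complex inner product space, computed as `Tr √(TᴴT)` via the
matrix of `T` in an orthonormal basis. -/
def endTraceNorm (T : 𝓗 →ₗ[ℂ] 𝓗) : ℝ :=
  ((Matrix.PosSemidef.sqrtOld (Matrix.posSemidef_conjTranspose_mul_self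
      (LinearMap.toMatrix (stdOrthonormalBasis ℂ 𝓗).toBasis
        (stdOrthonormalBasis ℂ 𝓗).toBasis T))).trace).re

set_option linter.unusedSectionVars false in
lemma trace_eq_sum_inner' {ι : Type*} [Fintype ι] [DecidableEq ι]
    (b : OrthonormalBasis ι ℂ 𝓗) (T : 𝓗 →ₗ[ℂ] 𝓗) :
    LinearMap.trace ℂ 𝓗 T = ∑ i, (inner ℂ (b i) (T (b i)) : ℂ) := by
  rw [LinearMap.trace_eq_matrix_trace ℂ b.toBasis, Matrix.trace]
  congr 1
  ext i
  rw [Matrix.diag_apply, LinearMap.toMatrix_apply, OrthonormalBasis.coe_toBasis,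
    OrthonormalBasis.coe_toBasis_repr_apply, OrthonormalBasis.repr_apply_apply]


lemma abs_inner_map_le (G : 𝓗 →ₗ[ℂ] 𝓗) (v : 𝓗) (hv : ‖v‖ = 1) :
    ‖(inner ℂ v (G v) : ℂ)‖ ≤ endOpNorm G := by
  calc ‖(inner ℂ v (G v) : ℂ)‖ ≤ ‖v‖ * ‖G v‖ := by
        simpa using norm_inner_le_norm (𝕜 := ℂ) v (G v)
    _ = ‖G v‖ := by rw [hv, one_mul]
    _ ≤ ‖LinearMap.toContinuousLinearMap G‖ * ‖v‖ :=
        (LinearMap.toContinuousLinearMap G).le_opNorm v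
    _ = endOpNorm G := by rw [hv, mul_one, endOpNorm]

lemma trace_comp_le (A : 𝓗 →ₗ[ℂ] 𝓗) (hA : A.IsSymmetric) (G : 𝓗 →ₗ[ℂ] 𝓗) :
    (LinearMap.trace ℂ 𝓗 (A ∘ₗ G)).re ≤ endTraceNorm A * endOpNorm G := by
  classical
  set b := stdOrthonormalBasis ℂ 𝓗 with hb
  set M := LinearMap.toMatrix b.toBasis b.toBasis A with hMdef
  set N := LinearMap.toMatrix b.toBasis b.toBasis G with hNdef
  have hM : M.IsHermitian := by
    ext i j
    simp only [Matrix.conjTranspose_apply, hMdef, LinearMap.toMatrix_apply,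
      OrthonormalBasis.coe_toBasis, OrthonormalBasis.coe_toBasis_repr_apply,
      OrthonormalBasis.repr_apply_apply]
    rw [← starRingEnd_apply, inner_conj_symm]
    exact hA (b i) (b j)
  set U : Matrix (Fin (Module.finrank ℂ 𝓗)) (Fin (Module.finrank ℂ 𝓗)) ℂ := ((hM.eigenvectorUnitary : Matrix.unitaryGroup (Fin (Module.finrank ℂ 𝓗)) ℂ) : Matrix (Fin (Module.finrank ℂ 𝓗)) (Fin (Module.finrank ℂ 𝓗)) ℂ) with hU
  set d := hM.eigenvalues with hd
  have hUU : star U * U = 1 := Matrix.mem_unitaryGroup_iff'.mp hM.eigenvectorUnitary.2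
  have hUU' : U * star U = 1 := Matrix.mem_unitaryGroup_iff.mp hM.eigenvectorUnitary.2
  have hspec : M = U * Matrix.diagonal (RCLike.ofReal ∘ d) * star U := hM.spectral_theorem
  -- each diagonal entry of `star U * N * U` is an expectation value of G in a unit vector
  have hcol : ∀ i, ∃ v : 𝓗, ‖v‖ = 1 ∧ (star U * N * U) i i = (inner ℂ v (G v) : ℂ) := by
    intro i
    set v : 𝓗 := ∑ j, U j i • b j with hv
    have hrepr : ∀ j, b.repr v j = U j i := by
      intro j
      rw [OrthonormalBasis.repr_apply_apply, hv, inner_sum]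
      simp [inner_smul_right, orthonormal_iff_ite.mp b.orthonormal]
    refine ⟨v, ?_, ?_⟩
    · have h2 : (‖v‖ : ℝ) ^ 2 = 1 := by
        have := b.repr.norm_map v
        rw [← this]
        rw [EuclideanSpace.norm_eq]
        rw [Real.sq_sqrt (by positivity)]
        calc ∑ j, ‖b.repr v j‖ ^ 2 = ∑ j, ‖U j i‖ ^ 2 := by
              refine Finset.sum_congr rfl fun j _ => by rw [hrepr j]
          _ = ((star U * U) i i).re := by
              rw [Matrix.mul_apply, Complex.re_sum]
              refine Finset.sum_congr rfl fun j _ => ?_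
              rw [Matrix.star_apply, ← starRingEnd_apply, ← Complex.normSq_eq_conj_mul_self]
              simp [Complex.sq_norm]
          _ = 1 := by rw [hUU]; simp
      nlinarith [norm_nonneg v]
    · have hGrepr : ∀ j, b.repr (G v) j = (Matrix.mulVec N (fun k => U k i)) j := by
        intro j
        have h1 := congrFun (LinearMap.toMatrix_mulVec_repr b.toBasis b.toBasis G v) j
        simp only [OrthonormalBasis.coe_toBasis_repr_apply] at h1
        rw [← h1]
        simp only [Matrix.mulVec, dotProduct]
        refine Finset.sum_congr rfl fun k _ => ?_
        rw [OrthonormalBasis.coe_toBasis_repr_apply, hrepr k]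
      have hinner : (inner ℂ v (G v) : ℂ) = ∑ j, (starRingEnd ℂ) (b.repr v j) * b.repr (G v) j := by
        rw [← b.repr.inner_map_map v (G v)]
        rw [PiLp.inner_apply]; refine Finset.sum_congr rfl fun j _ => ?_; rw [RCLike.inner_apply]; ring
      rw [hinner]
      have lhs : (star U * N * U) i i = ∑ j, ∑ k, star (U j i) * N j k * U k i := by
        simp only [Matrix.mul_apply, Matrix.star_apply, Finset.sum_mul]
        exact Finset.sum_comm
      rw [lhs]
      refine Finset.sum_congr rfl fun j _ => ?_
      rw [hrepr j, hGrepr j]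
      simp only [Matrix.mulVec, dotProduct, Finset.mul_sum]
      refine Finset.sum_congr rfl fun k _ => ?_
      rw [← starRingEnd_apply]
      ring
  -- trace identity
  have htr : LinearMap.trace ℂ 𝓗 (A ∘ₗ G) = ∑ i, (d i : ℂ) * (star U * N * U) i i := by
    rw [LinearMap.trace_eq_matrix_trace ℂ b.toBasis, LinearMap.toMatrix_comp _ b.toBasis,
      ← hMdef, ← hNdef]
    calc (M * N).trace = (U * (Matrix.diagonal (RCLike.ofReal ∘ d) * (star U * N))).trace := by
          rw [hspec, mul_assoc, mul_assoc]
      _ = ((Matrix.diagonal (RCLike.ofReal ∘ d) * (star U * N)) * U).trace :=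
          Matrix.trace_mul_comm _ _
      _ = (Matrix.diagonal (RCLike.ofReal ∘ d) * (star U * N * U)).trace := by
          rw [mul_assoc]
      _ = ∑ i, (d i : ℂ) * (star U * N * U) i i := by
          simp [Matrix.trace, Matrix.diag, Matrix.diagonal_mul, Function.comp]
  -- conjugated diagonal products
  have key : ∀ f g : Fin (Module.finrank ℂ 𝓗) → ℂ,
      (U * Matrix.diagonal f * star U) * (U * Matrix.diagonal g * star U)
        = U * Matrix.diagonal (fun i => f i * g i) * star U := by
    intro f g
    rw [← Matrix.diagonal_mul_diagonal]
    calc (U * Matrix.diagonal f * star U) * (U * Matrix.diagonal g * star U)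
        = U * Matrix.diagonal f * (star U * U) * (Matrix.diagonal g * star U) := by
          simp only [mul_assoc]
      _ = U * (Matrix.diagonal f * Matrix.diagonal g) * star U := by
          rw [hUU, mul_one]; simp only [mul_assoc]
  -- trace norm identity
  have hTN : endTraceNorm A = ∑ i, |d i| := by
    have hpsd : Matrix.PosSemidef (M.conjTranspose * M) := Matrix.posSemidef_conjTranspose_mul_self M
    set D' : Matrix (Fin (Module.finrank ℂ 𝓗)) (Fin (Module.finrank ℂ 𝓗)) ℂ :=
      Matrix.diagonal (fun i => ((|d i| : ℝ) : ℂ)) with hD'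
    set S := U * D' * star U with hS
    have hSpsd : S.PosSemidef := by
      have hD'psd : D'.PosSemidef := by
        refine Matrix.posSemidef_diagonal_iff.mpr fun i => ?_
        rw [Complex.zero_le_real]
        positivity
      have := hD'psd.mul_mul_conjTranspose_same U
      simpa [hS, Matrix.star_eq_conjTranspose] using this
    have hS2 : S ^ 2 = M.conjTranspose * M := by
      rw [hM.eq, hspec, hS, pow_two, hD', key, key]
      have habs : (fun i => ((|d i| : ℝ) : ℂ) * ((|d i| : ℝ) : ℂ))
          = fun i => (RCLike.ofReal ∘ d) i * (RCLike.ofReal ∘ d) i := by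
        funext i
        show ((|d i| : ℝ) : ℂ) * ((|d i| : ℝ) : ℂ) = ((d i : ℝ) : ℂ) * ((d i : ℝ) : ℂ)
        rw [← Complex.ofReal_mul, ← Complex.ofReal_mul, abs_mul_abs_self]
      rw [habs]
    have hsqrt : S = Matrix.PosSemidef.sqrtOld hpsd := by
      have e1 : Matrix.PosSemidef.sqrtOld hpsd = cfc Real.sqrt (M.conjTranspose * M) := by
        rw [hpsd.1.cfc_eq]; rfl
      have hSsa : IsSelfAdjoint S := hSpsd.1.isSelfAdjoint
      rw [e1, ← hS2, ← cfc_comp_pow Real.sqrt 2 S (ha := hSsa)]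
      conv_lhs => rw [← cfc_id' ℝ S hSsa]
      refine cfc_congr fun x hx => ?_
      rw [hSpsd.1.spectrum_real_eq_range_eigenvalues] at hx
      obtain ⟨i, rfl⟩ := hx
      exact (Real.sqrt_sq (hSpsd.eigenvalues_nonneg i)).symm
    have h1 : endTraceNorm A = ((Matrix.PosSemidef.sqrtOld hpsd).trace).re := rfl
    rw [h1, ← hsqrt]
    have h2 : S.trace = ∑ i, ((|d i| : ℝ) : ℂ) := by
      rw [hS, Matrix.trace_mul_cycle, hUU, one_mul, hD']
      simp [Matrix.trace, Matrix.diag]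
    rw [h2, Complex.re_sum]
    simp
  rw [htr, hTN, Complex.re_sum]
  calc ∑ i, ((d i : ℂ) * (star U * N * U) i i).re
      ≤ ∑ i, |d i| * endOpNorm G := by
        refine Finset.sum_le_sum fun i _ => ?_
        obtain ⟨v, hv1, hveq⟩ := hcol i
        rw [hveq, Complex.re_ofReal_mul]
        calc d i * (inner ℂ v (G v) : ℂ).re
            ≤ |d i * (inner ℂ v (G v) : ℂ).re| := le_abs_self _
          _ = |d i| * |(inner ℂ v (G v) : ℂ).re| := abs_mul _ _
          _ ≤ |d i| * endOpNorm G := by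
              refine mul_le_mul_of_nonneg_left ?_ (abs_nonneg _)
              exact (Complex.abs_re_le_norm _).trans (abs_inner_map_le G v hv1)
    _ = (∑ i, |d i|) * endOpNorm G := by rw [Finset.sum_mul]

/-- The orthogonal projection onto the span of a unit vector `ψ`: `v ↦ ⟨ψ, v⟩ • ψ`. -/
def vecProj (ψ : 𝓗) : 𝓗 →ₗ[ℂ] 𝓗 := LinearMap.smulRight (innerSL ℂ ψ).toLinearMap ψ

theorem parent_hamiltonian_fidelity_witness
    [Nontrivial 𝓗]
    (G : 𝓗 →ₗ[ℂ] 𝓗) (hG : G.IsSymmetric)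
    (E₀ E₁ : ℝ) (ψ : 𝓗) (hψ : ‖ψ‖ = 1)
    (hE0 : Module.End.HasEigenvalue G (E₀ : ℂ))
    (hE0min : ∀ μ : ℂ, Module.End.HasEigenvalue G μ → E₀ ≤ μ.re)
    (heig : Module.End.eigenspace G (E₀ : ℂ) = Submodule.span ℂ {ψ})
    (hE1 : Module.End.HasEigenvalue G (E₁ : ℂ))
    (hgap : E₀ < E₁)
    (hE1min : ∀ μ : ℂ, Module.End.HasEigenvalue G μ → μ ≠ (E₀ : ℂ) → E₁ ≤ μ.re)
    (ρ : 𝓗 →ₗ[ℂ] 𝓗) (hρsym : ρ.IsSymmetric)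
    (hρpos : ∀ v : 𝓗, 0 ≤ (inner ℂ v (ρ v) : ℂ).re)
    (hρtr : LinearMap.trace ℂ 𝓗 ρ = 1) :
    1 - (inner ℂ ψ (ρ ψ) : ℂ).re ≤
        ((LinearMap.trace ℂ 𝓗 (ρ ∘ₗ G)).re - E₀) / (E₁ - E₀) ∧
    (LinearMap.trace ℂ 𝓗 (ρ ∘ₗ G)).re - E₀ ≤ endTraceNorm (ρ - vecProj ψ) * endOpNorm G ∧
    ((LinearMap.trace ℂ 𝓗 (ρ ∘ₗ G)).re - E₀) / (E₁ - E₀) ≤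
        endTraceNorm (ρ - vecProj ψ) * endOpNorm G / (E₁ - E₀) := by
  classical
  have hgap' : (0:ℝ) < E₁ - E₀ := by linarith
  set b := hG.eigenvectorBasis rfl with hb
  set μ := hG.eigenvalues (n := Module.finrank ℂ 𝓗) rfl with hμ
  have hψ0 : ψ ≠ 0 := by intro h; rw [h, norm_zero] at hψ; norm_num at hψ
  have hψmem : ψ ∈ Module.End.eigenspace G (E₀ : ℂ) := by
    rw [heig]; exact Submodule.mem_span_singleton_self ψ
  have hGψ : G ψ = (E₀:ℂ) • ψ := Module.End.mem_eigenspace_iff.mp hψmem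
  -- existence of the ground index
  have hex : ∃ i, b.repr ψ i ≠ 0 := by
    by_contra h
    push_neg at h
    apply hψ0
    have : b.repr ψ = 0 := by ext i; exact h i
    simpa using congrArg b.repr.symm this
  obtain ⟨i₀, hi₀⟩ := hex
  have happly : ∀ i, G (b i) = ((μ i : ℝ) : ℂ) • b i := fun i =>
    hG.apply_eigenvectorBasis rfl i
  have hmu : ∀ i, (μ i : ℂ) * b.repr ψ i = (E₀ : ℂ) * b.repr ψ i := by
    intro i
    have h1 := hG.eigenvectorBasis_apply_self_apply rfl ψ i
    rw [hGψ, map_smul] at h1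
    have h2 : (E₀ : ℂ) * b.repr ψ i = (μ i : ℂ) * b.repr ψ i := by
      simpa using h1
    exact h2.symm
  have hmui₀ : μ i₀ = E₀ := by
    have h2 : (μ i₀ : ℂ) = (E₀ : ℂ) := mul_right_cancel₀ hi₀ (hmu i₀)
    exact_mod_cast h2
  -- b i₀ spans the same line as ψ
  have hbi₀mem : b i₀ ∈ Submodule.span ℂ {ψ} := by
    rw [← heig]
    have h3 := happly i₀
    rw [hmui₀] at h3
    exact Module.End.mem_eigenspace_iff.mpr h3
  obtain ⟨c, hc⟩ := Submodule.mem_span_singleton.mp hbi₀mem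
  have hbnorm : ∀ i, ‖b i‖ = 1 := fun i => b.orthonormal.1 i
  have hcabs : ‖c‖ = 1 := by
    have := hbnorm i₀
    rw [← hc] at this
    rwa [norm_smul, hψ, mul_one] at this
  have hc0 : c ≠ 0 := by
    intro h; rw [h, zero_smul] at hc
    have := hbnorm i₀; rw [← hc, norm_zero] at this; norm_num at this
  -- the populations
  set p : Fin (Module.finrank ℂ 𝓗) → ℝ := fun i => (inner ℂ (b i) (ρ (b i)) : ℂ).re with hp
  have hpnn : ∀ i, 0 ≤ p i := fun i => hρpos (b i)
  have hpsum : ∑ i, p i = 1 := by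
    have := trace_eq_sum_inner' b ρ
    rw [hρtr] at this
    have h4 := congrArg Complex.re this.symm
    rwa [Complex.re_sum, Complex.one_re] at h4
  have hpi₀ : p i₀ = (inner ℂ ψ (ρ ψ) : ℂ).re := by
    have : (inner ℂ (b i₀) (ρ (b i₀)) : ℂ) = inner ℂ ψ (ρ ψ) := by
      rw [← hc, map_smul, inner_smul_left, inner_smul_right, ← mul_assoc]
      have hcc : (starRingEnd ℂ) c * c = 1 := by
        rw [← Complex.normSq_eq_conj_mul_self, Complex.normSq_eq_norm_sq,
          hcabs]
        norm_num
      rw [hcc, one_mul]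
    rw [hp]
    simp only
    rw [this]
  -- eigenvalues away from the ground index are at least E₁
  have hmularge : ∀ i, i ≠ i₀ → E₁ ≤ μ i := by
    intro i hi
    have hev := hG.hasEigenvalue_eigenvalues rfl i
    have hne : (μ i : ℂ) ≠ (E₀ : ℂ) := by
      intro h
      have hbimem : b i ∈ Submodule.span ℂ {ψ} := by
        rw [← heig]
        have h3 := happly i
        rw [h] at h3
        exact Module.End.mem_eigenspace_iff.mpr h3
      obtain ⟨a, ha⟩ := Submodule.mem_span_singleton.mp hbimem
      have ha0 : a ≠ 0 := by
        intro h'; rw [h', zero_smul] at ha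
        have := hbnorm i; rw [← ha, norm_zero] at this; norm_num at this
      have horth : (inner ℂ (b i₀) (b i) : ℂ) = 0 := b.orthonormal.2 (Ne.symm hi)
      rw [← hc, ← ha, inner_smul_left, inner_smul_right] at horth
      rw [inner_self_eq_norm_sq_to_K, hψ] at horth
      simp at horth
      rcases horth with h' | h'
      · exact hc0 (by simpa using congrArg (starRingEnd ℂ) h')
      · exact ha0 h'
    have := hE1min (μ i) hev hne
    simpa using this
  -- the trace of ρ ∘ G as a weighted sum
  have htrace : (LinearMap.trace ℂ 𝓗 (ρ ∘ₗ G)).re = ∑ i, μ i * p i := by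
    rw [trace_eq_sum_inner' b (ρ ∘ₗ G), Complex.re_sum]
    refine Finset.sum_congr rfl fun i _ => ?_
    have h5 : (ρ ∘ₗ G) (b i) = (μ i : ℂ) • ρ (b i) := by
      rw [LinearMap.comp_apply, happly i, map_smul]
    rw [h5, inner_smul_right, Complex.re_ofReal_mul]
  -- the energy bound
  have hbound : E₀ * p i₀ + E₁ * (1 - p i₀) ≤ (LinearMap.trace ℂ 𝓗 (ρ ∘ₗ G)).re := by
    rw [htrace]
    have hsplit : ∑ i, μ i * p i = μ i₀ * p i₀ + ∑ i ∈ Finset.univ.erase i₀, μ i * p i :=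
      (Finset.add_sum_erase _ _ (Finset.mem_univ i₀)).symm
    have herase : 1 - p i₀ = ∑ i ∈ Finset.univ.erase i₀, p i := by
      have h6 := Finset.add_sum_erase Finset.univ p (Finset.mem_univ i₀)
      rw [hpsum] at h6
      linarith
    rw [hsplit, hmui₀, herase, Finset.mul_sum]
    refine add_le_add le_rfl (Finset.sum_le_sum fun i hi => ?_)
    exact mul_le_mul_of_nonneg_right (hmularge i (Finset.mem_erase.mp hi).1) (hpnn i)
  have hPsym : (vecProj ψ).IsSymmetric := by
    intro x y
    simp only [vecProj, LinearMap.smulRight_apply, ContinuousLinearMap.coe_coe, innerSL_apply_apply,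
      inner_smul_left, inner_smul_right, inner_conj_symm]
    ring
  have hAsym : (ρ - vecProj ψ).IsSymmetric := hρsym.sub hPsym
  have hGP : G ∘ₗ vecProj ψ = (E₀ : ℂ) • vecProj ψ := by
    ext v
    simp only [LinearMap.comp_apply, vecProj, LinearMap.smulRight_apply,
      ContinuousLinearMap.coe_coe, innerSL_apply_apply, map_smul, hGψ, LinearMap.smul_apply]
    rw [smul_comm]
  have hTrP : LinearMap.trace ℂ 𝓗 (vecProj ψ) = 1 := by
    rw [trace_eq_sum_inner' (stdOrthonormalBasis ℂ 𝓗)]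
    simp only [vecProj, LinearMap.smulRight_apply, ContinuousLinearMap.coe_coe, innerSL_apply_apply,
      inner_smul_right]
    rw [OrthonormalBasis.sum_inner_mul_inner]
    rw [inner_self_eq_norm_sq_to_K, hψ]
    norm_num
  have hTrPG : LinearMap.trace ℂ 𝓗 (vecProj ψ ∘ₗ G) = (E₀ : ℂ) := by
    have hcomm : LinearMap.trace ℂ 𝓗 (vecProj ψ ∘ₗ G) = LinearMap.trace ℂ 𝓗 (G ∘ₗ vecProj ψ) :=
      LinearMap.trace_mul_comm ℂ (vecProj ψ) G
    rw [hcomm, hGP, map_smul, hTrP, smul_eq_mul, mul_one]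
  have part2 : (LinearMap.trace ℂ 𝓗 (ρ ∘ₗ G)).re - E₀ ≤
      endTraceNorm (ρ - vecProj ψ) * endOpNorm G := by
    have hsub : (ρ - vecProj ψ) ∘ₗ G = ρ ∘ₗ G - vecProj ψ ∘ₗ G := LinearMap.sub_comp _ _ _
    have hle := trace_comp_le (ρ - vecProj ψ) hAsym G
    rw [hsub, map_sub, Complex.sub_re, hTrPG] at hle
    simpa using hle
  refine ⟨?_, part2, ?_⟩
  · rw [le_div_iff₀ hgap']
    rw [hpi₀] at hbound
    nlinarith
  · have hmul := mul_le_mul_of_nonneg_right part2 (le_of_lt (inv_pos.mpr hgap'))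
    simpa [div_eq_mul_inv] using hmul

end
end

section
/- Let 𝓗 be a nonzero finite-dimensional complex inner product space and Γ a positive natural number. Let G be a self-adjoint endomorphism of 𝓗 such that: ψ is a unit vector with G ψ = 0, the eigenspace of G for eigenvalue 0 is one-dimensional, every nonzero eigenvalue of G is ≥ 1, and ‖G‖ ≤ Γ. Let 𝓘 > 0 and γ ≥ 0 be reals with Γ·γ < 𝓘, and set δ = (𝓘 − Γ·γ)/2. Let G' be a self-adjoint endomorphism of 𝓗 with ‖G − G'‖ ≤ δ, and let ρ be a positive semidefinite endomorphism of 𝓗 with trace 1 and ‖ρ − P_ψ‖₁ ≤ γ, where P_ψ is the orthogonal projection onto span(ψ). Then 1 − ⟨ψ, ρψ⟩ ≤ Tr(ρ∘G') + δ ≤ 𝓘. -/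
open scoped ComplexOrder

noncomputable section

variable {𝓗 : Type*} [NormedAddCommGroup 𝓗] [InnerProductSpace ℂ 𝓗] [FiniteDimensional ℂ 𝓗]

section AuxiliaryLemmas

open Matrix

set_option linter.unusedSectionVars false
set_option linter.unusedTactic false
set_option linter.unusedVariables false
set_option maxHeartbeats 1000000

local notation "⟪" x ", " y "⟫" => @inner ℂ _ _ x y

lemma onb_trace {ι : Type*} [Fintype ι] [DecidableEq ι] (e : OrthonormalBasis ι ℂ 𝓗)
    (T : 𝓗 →ₗ[ℂ] 𝓗) : LinearMap.trace ℂ 𝓗 T = ∑ i, ⟪e i, T (e i)⟫ := by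
  rw [LinearMap.trace_eq_matrix_trace ℂ e.toBasis, Matrix.trace]
  congr 1
  ext i
  rw [Matrix.diag_apply, LinearMap.toMatrix_apply, e.coe_toBasis_repr_apply,
    e.repr_apply_apply, e.coe_toBasis]

lemma inner_opNorm (T : 𝓗 →ₗ[ℂ] 𝓗) (v : 𝓗) : ‖(⟪v, T v⟫ : ℂ)‖ ≤ endOpNorm T * ‖v‖ ^ 2 := by
  calc ‖(⟪v, T v⟫ : ℂ)‖ ≤ ‖v‖ * ‖T v‖ := norm_inner_le_norm v (T v)
    _ ≤ ‖v‖ * (endOpNorm T * ‖v‖) := by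
        refine mul_le_mul_of_nonneg_left ?_ (norm_nonneg v)
        exact (LinearMap.toContinuousLinearMap T).le_opNorm v
    _ = endOpNorm T * ‖v‖ ^ 2 := by ring

lemma endOpNorm_neg (T : 𝓗 →ₗ[ℂ] 𝓗) : endOpNorm (-T) = endOpNorm T := by
  unfold endOpNorm; rw [map_neg, norm_neg]

lemma vecProj_isSymmetric (ψ : 𝓗) : (vecProj ψ).IsSymmetric := by
  intro x y
  simp only [vecProj, LinearMap.smulRight_apply, ContinuousLinearMap.coe_coe, innerSL_apply_apply,
    inner_smul_left, inner_smul_right, inner_conj_symm]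
  ring

/-- Quadratic-form lower bound coming from the spectral gap. -/
lemma gap_quadform (G : 𝓗 →ₗ[ℂ] 𝓗) (hGsym : G.IsSymmetric)
    (ψ : 𝓗) (hψ : ‖ψ‖ = 1) (hGψ : G ψ = 0)
    (heig : Module.finrank ℂ (Module.End.eigenspace G (0 : ℂ)) = 1)
    (hgap : ∀ μ : ℂ, Module.End.HasEigenvalue G μ → μ ≠ 0 → 1 ≤ μ.re) (v : 𝓗) :
    ‖v‖ ^ 2 - ‖(⟪ψ, v⟫ : ℂ)‖ ^ 2 ≤ (⟪v, G v⟫ : ℂ).re := by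
  set f := hGsym.eigenvectorBasis rfl with hf
  set ν := hGsym.eigenvalues rfl with hν
  set r : Fin (Module.finrank ℂ 𝓗) → ℝ := fun i => ‖(⟪f i, v⟫ : ℂ)‖ ^ 2 with hr
  have hψ0 : ψ ≠ 0 := fun h => by simp [h] at hψ
  have hspan : Module.End.eigenspace G (0 : ℂ) = (ℂ ∙ ψ) := by
    refine (Submodule.eq_of_le_of_finrank_le ?_ ?_).symm
    · rw [Submodule.span_singleton_le_iff_mem]
      exact Module.End.mem_eigenspace_iff.mpr (by simp [hGψ])
    · rw [heig, finrank_span_singleton hψ0]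
  -- expansion of the quadratic form
  have hexp : (⟪v, G v⟫ : ℂ).re = ∑ i, ν i * r i := by
    have h1 : (⟪v, G v⟫ : ℂ) = ∑ i, (ν i : ℂ) * (r i : ℂ) := by
      rw [← f.sum_inner_mul_inner v (G v)]
      refine Finset.sum_congr rfl fun i _ => ?_
      have h2 : (⟪f i, G v⟫ : ℂ) = (ν i : ℂ) * ⟪f i, v⟫ := by
        rw [← hGsym (f i) v, show G (f i) = (ν i : ℂ) • f i from
          hGsym.apply_eigenvectorBasis rfl i, inner_smul_left, Complex.conj_ofReal]
      rw [h2, ← inner_conj_symm v (f i)]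
      rw [show (starRingEnd ℂ) (⟪f i, v⟫ : ℂ) * ((ν i : ℂ) * ⟪f i, v⟫)
          = (ν i : ℂ) * ((starRingEnd ℂ) (⟪f i, v⟫ : ℂ) * ⟪f i, v⟫) by ring,
        RCLike.conj_mul, hr]
      push_cast
      rfl
    rw [h1]
    push_cast
    simp
  -- Parseval
  have hpars : ∑ i, r i = ‖v‖ ^ 2 := by
    have h1 : (⟪v, v⟫ : ℂ) = ∑ i, (r i : ℂ) := by
      rw [← f.sum_inner_mul_inner v v]
      refine Finset.sum_congr rfl fun i _ => ?_
      rw [← inner_conj_symm v (f i), RCLike.conj_mul, hr]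
      push_cast
      rfl
    have h2 := congrArg Complex.re h1
    rw [inner_self_eq_norm_sq_to_K] at h2
    simpa [← Complex.ofReal_pow] using h2.symm
  -- nonzero eigenvalues are at least 1
  have hcases : ∀ i, ν i = 0 ∨ 1 ≤ ν i := by
    intro i
    by_cases h : ν i = 0
    · exact Or.inl h
    · refine Or.inr ?_
      have := hgap (ν i : ℂ) (hGsym.hasEigenvalue_eigenvalues rfl i)
        (by exact_mod_cast h)
      simpa using this
  -- zero eigenvectors are multiples of ψ
  have hmemspan : ∀ i, ν i = 0 → f i ∈ (ℂ ∙ ψ) := by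
    intro i hi
    rw [← hspan]
    refine Module.End.mem_eigenspace_iff.mpr ?_
    rw [show G (f i) = (ν i : ℂ) • f i from hGsym.apply_eigenvectorBasis rfl i, hi]
    simp
  have hre : ∀ i, ν i = 0 → r i = ‖(⟪ψ, v⟫ : ℂ)‖ ^ 2 := by
    intro i hi
    obtain ⟨a, ha⟩ := Submodule.mem_span_singleton.mp (hmemspan i hi)
    have hfnorm : ‖f i‖ = 1 := f.orthonormal.1 i
    have hanorm : ‖a‖ = 1 := by
      rw [← ha, norm_smul, hψ, mul_one] at hfnorm
      exact hfnorm
    rw [hr]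
    simp only
    rw [← ha, inner_smul_left, norm_mul, RCLike.norm_conj, hanorm, one_mul]
  have huniq : ∀ i j, ν i = 0 → ν j = 0 → i = j := by
    intro i j hi hj
    by_contra hne
    obtain ⟨a, ha⟩ := Submodule.mem_span_singleton.mp (hmemspan i hi)
    obtain ⟨b, hb⟩ := Submodule.mem_span_singleton.mp (hmemspan j hj)
    have hfnormi : ‖f i‖ = 1 := f.orthonormal.1 i
    have hfnormj : ‖f j‖ = 1 := f.orthonormal.1 j
    have ha0 : a ≠ 0 := by
      intro h; rw [h, zero_smul] at ha; rw [← ha] at hfnormi; simp at hfnormi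
    have hb0 : b ≠ 0 := by
      intro h; rw [h, zero_smul] at hb; rw [← hb] at hfnormj; simp at hfnormj
    have horth : (⟪f i, f j⟫ : ℂ) = 0 := f.orthonormal.2 hne
    rw [← ha, ← hb, inner_smul_left, inner_smul_right,
      inner_self_eq_norm_sq_to_K, hψ] at horth
    have horth' : (starRingEnd ℂ) a * b = 0 := by simpa using horth
    rcases mul_eq_zero.mp horth' with h | h
    · exact ha0 (by simpa using h)
    · exact hb0 h
  -- sum manipulation
  have hrpos : ∀ i, 0 ≤ r i := fun i => sq_nonneg _
  set s := Finset.univ.filter (fun i => ν i = 0) with hs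
  have hA : ∑ i ∈ s, ν i * r i = 0 := by
    refine Finset.sum_eq_zero fun i hi => ?_
    rw [(Finset.mem_filter.mp hi).2, zero_mul]
  have hB : ∑ i ∈ sᶜ, r i ≤ ∑ i ∈ sᶜ, ν i * r i := by
    refine Finset.sum_le_sum fun i hi => ?_
    have hne : ¬ ν i = 0 := by
      simpa [hs, Finset.mem_compl] using hi
    have h1 : 1 ≤ ν i := (hcases i).resolve_left hne
    nlinarith [hrpos i]
  have hC : ∑ i ∈ s, r i + ∑ i ∈ sᶜ, r i = ‖v‖ ^ 2 := by
    rw [Finset.sum_add_sum_compl, hpars]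
  have hD : ∑ i ∈ s, ν i * r i + ∑ i ∈ sᶜ, ν i * r i = ∑ i, ν i * r i :=
    Finset.sum_add_sum_compl _ _
  have hfilt : ∑ i ∈ s, r i ≤ ‖(⟪ψ, v⟫ : ℂ)‖ ^ 2 := by
    rcases Finset.eq_empty_or_nonempty s with h | ⟨i0, hi0⟩
    · rw [h, Finset.sum_empty]; positivity
    · have hi0' : ν i0 = 0 := (Finset.mem_filter.mp hi0).2
      have hsub : s ⊆ {i0} := by
        intro j hj
        have hj' : ν j = 0 := (Finset.mem_filter.mp hj).2
        exact Finset.mem_singleton.mpr ((huniq i0 j hi0' hj')).symm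
      calc ∑ i ∈ s, r i ≤ ∑ i ∈ {i0}, r i :=
            Finset.sum_le_sum_of_subset_of_nonneg hsub (fun i _ _ => hrpos i)
        _ = r i0 := Finset.sum_singleton _ _
        _ = ‖(⟪ψ, v⟫ : ℂ)‖ ^ 2 := hre i0 hi0'
  rw [hexp]
  linarith
open scoped MatrixOrder in
lemma sqrtOld_eq_of_sq {n : Type*} [Fintype n] [DecidableEq n] {A S : Matrix n n ℂ}
    (hA : A.PosSemidef) (hS : S.PosSemidef) (h : S ^ 2 = A) : hA.sqrtOld = S := by
  have h1 : hA.sqrtOld = CFC.sqrt A := by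
    rw [CFC.sqrt_eq_cfc, cfc_nnreal_eq_real _ A, hA.1.cfc_eq]
    simp only [Matrix.PosSemidef.sqrtOld, Matrix.IsHermitian.cfc, Unitary.conjStarAlgAut_apply]
    congr 3
    funext i
    simp [Real.coe_toNNReal', hA.eigenvalues_nonneg i]
  rw [h1, CFC.sqrt_eq_iff _ _ hA.nonneg hS.nonneg, ← h, sq]
lemma traceNorm_symmetric {n : ℕ} (hn : Module.finrank ℂ 𝓗 = n)
    (A : 𝓗 →ₗ[ℂ] 𝓗) (hA : A.IsSymmetric) :
    endTraceNorm A = ∑ i, |hA.eigenvalues hn i| := by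
  subst hn
  unfold endTraceNorm
  set B := stdOrthonormalBasis ℂ 𝓗 with hB
  set M := LinearMap.toMatrix B.toBasis B.toBasis A with hM
  set E := hA.eigenvectorBasis rfl with hE
  set μ := hA.eigenvalues rfl with hμ
  set P := B.toBasis.toMatrix ⇑E.toBasis with hP
  set Q := E.toBasis.toMatrix ⇑B.toBasis with hQdef
  have hdiag : LinearMap.toMatrix E.toBasis E.toBasis A
      = Matrix.diagonal (fun i => (μ i : ℂ)) := by
    ext i j
    rw [LinearMap.toMatrix_apply, OrthonormalBasis.coe_toBasis]
    rw [show A (E j) = (μ j : ℂ) • E j from hA.apply_eigenvectorBasis rfl j]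
    rw [_root_.map_smul]
    simp only [Finsupp.smul_apply, OrthonormalBasis.coe_toBasis_repr_apply,
      OrthonormalBasis.repr_self, EuclideanSpace.single_apply, smul_eq_mul,
      Matrix.diagonal_apply]
    split_ifs with h1 h2 h3 <;> simp_all
  have hPHP : Pᴴ * P = 1 := by
    have := B.toMatrix_orthonormalBasis_conjTranspose_mul_self E
    rwa [← E.coe_toBasis] at this
  have hPQ : P * Q = 1 := Module.Basis.toMatrix_mul_toMatrix_flip _ _
  have hQ : Q = Pᴴ := by
    calc Q = (Pᴴ * P) * Q := by rw [hPHP, one_mul]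
    _ = Pᴴ * (P * Q) := by rw [mul_assoc]
    _ = Pᴴ := by rw [hPQ, mul_one]
  have key : M = P * Matrix.diagonal (fun i => (μ i : ℂ)) * Pᴴ := by
    rw [← hQ, ← hdiag, hM, hP, hQdef,
      basis_toMatrix_mul_linearMap_toMatrix_mul_basis_toMatrix]
  have conjmul : ∀ D₁ D₂ : Matrix (Fin (Module.finrank ℂ 𝓗)) (Fin (Module.finrank ℂ 𝓗)) ℂ,
      (P * D₁ * Pᴴ) * (P * D₂ * Pᴴ) = P * (D₁ * D₂) * Pᴴ := by
    intro D₁ D₂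
    calc (P * D₁ * Pᴴ) * (P * D₂ * Pᴴ) = P * (D₁ * ((Pᴴ * P) * (D₂ * Pᴴ))) := by
          simp only [mul_assoc]
      _ = P * (D₁ * D₂) * Pᴴ := by rw [hPHP, one_mul]; simp only [mul_assoc]
  have hMHM : Mᴴ * M = P * Matrix.diagonal (fun i => ((μ i : ℂ))^2) * Pᴴ := by
    have hMH : Mᴴ = P * Matrix.diagonal (fun i => (μ i : ℂ)) * Pᴴ := by
      rw [key, Matrix.conjTranspose_mul, Matrix.conjTranspose_mul,
        Matrix.conjTranspose_conjTranspose, Matrix.diagonal_conjTranspose]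
      have hstar : star ((fun i => (μ i : ℂ))) = fun i => (μ i : ℂ) := by
        funext i; simp [Complex.conj_ofReal]
      rw [hstar, mul_assoc]
    rw [hMH, key, conjmul, Matrix.diagonal_mul_diagonal]
    have : (fun i => (μ i : ℂ) * (μ i : ℂ)) = fun i => ((μ i : ℂ))^2 :=
      funext fun i => (pow_two _).symm
    rw [this]
  set S := P * Matrix.diagonal (fun i => ((|μ i| : ℝ) : ℂ)) * Pᴴ with hS
  have hSpos : S.PosSemidef := by
    refine Matrix.PosSemidef.mul_mul_conjTranspose_same ?_ P
    refine Matrix.posSemidef_diagonal_iff.mpr fun i => ?_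
    exact Complex.zero_le_real.mpr (abs_nonneg _)
  have hS2 : S ^ 2 = Mᴴ * M := by
    rw [pow_two, hS, conjmul, hMHM, Matrix.diagonal_mul_diagonal]
    have : (fun i => ((|μ i| : ℝ) : ℂ) * ((|μ i| : ℝ) : ℂ)) = fun i => ((μ i : ℂ))^2 := by
      funext i
      rw [← Complex.ofReal_mul, abs_mul_abs_self, ← Complex.ofReal_pow, pow_two]
    rw [this]
  have hsqrt : Matrix.PosSemidef.sqrtOld (Matrix.posSemidef_conjTranspose_mul_self M) = S :=
    sqrtOld_eq_of_sq _ hSpos hS2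
  rw [hsqrt, hS, Matrix.trace_mul_cycle, hPHP, one_mul, Matrix.trace_diagonal]
  push_cast
  simp

theorem certification_from_approximate_parent_hamiltonian
    [Nontrivial 𝓗] (Γ : ℕ) (hΓ : 0 < Γ)
    (G : 𝓗 →ₗ[ℂ] 𝓗) (hGsym : G.IsSymmetric)
    (ψ : 𝓗) (hψ : ‖ψ‖ = 1) (hGψ : G ψ = 0)
    (heig : Module.finrank ℂ (Module.End.eigenspace G (0 : ℂ)) = 1)
    (hgap : ∀ μ : ℂ, Module.End.HasEigenvalue G μ → μ ≠ 0 → 1 ≤ μ.re)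
    (hGnorm : endOpNorm G ≤ (Γ : ℝ))
    (𝓘 γ : ℝ) (h𝓘 : 0 < 𝓘) (hγ : 0 ≤ γ) (hΓγ : (Γ : ℝ) * γ < 𝓘)
    (δ : ℝ) (hδ : δ = (𝓘 - (Γ : ℝ) * γ) / 2)
    (G' : 𝓗 →ₗ[ℂ] 𝓗) (hG'sym : G'.IsSymmetric)
    (happrox : endOpNorm (G - G') ≤ δ)
    (ρ : 𝓗 →ₗ[ℂ] 𝓗) (hρsym : ρ.IsSymmetric)
    (hρpos : ∀ v : 𝓗, 0 ≤ (inner ℂ v (ρ v) : ℂ).re)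
    (hρtr : LinearMap.trace ℂ 𝓗 ρ = 1)
    (hclose : endTraceNorm (ρ - vecProj ψ) ≤ γ) :
    1 - (inner ℂ ψ (ρ ψ) : ℂ).re ≤ (LinearMap.trace ℂ 𝓗 (ρ ∘ₗ G')).re + δ ∧
    (LinearMap.trace ℂ 𝓗 (ρ ∘ₗ G')).re + δ ≤ 𝓘 := by
  classical
  set n := Module.finrank ℂ 𝓗 with hn
  -- eigen-decomposition of ρ
  set g := hρsym.eigenvectorBasis rfl with hg
  set p := hρsym.eigenvalues rfl with hp
  have hgnorm : ∀ i, ‖g i‖ = 1 := fun i => g.orthonormal.1 i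
  have happly : ∀ i, ρ (g i) = (p i : ℂ) • g i := fun i =>
    hρsym.apply_eigenvectorBasis rfl i
  -- trace of ρ ∘ S via the eigenbasis of ρ
  have htr : ∀ S : 𝓗 →ₗ[ℂ] 𝓗,
      LinearMap.trace ℂ 𝓗 (ρ ∘ₗ S) = ∑ i, (p i : ℂ) * ⟪g i, S (g i)⟫ := by
    intro S
    rw [onb_trace g]
    refine Finset.sum_congr rfl fun i _ => ?_
    rw [LinearMap.comp_apply, ← hρsym (g i) (S (g i)), happly i, inner_smul_left,
      Complex.conj_ofReal]
  have hp_nonneg : ∀ i, 0 ≤ p i := by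
    intro i
    have h := hρpos (g i)
    rw [happly i, inner_smul_right, inner_self_eq_norm_sq_to_K, hgnorm i] at h
    simpa using h
  have hp_sum : ∑ i, p i = 1 := by
    have h1 : LinearMap.trace ℂ 𝓗 ρ = ∑ i, (p i : ℂ) := by
      rw [onb_trace g]
      refine Finset.sum_congr rfl fun i _ => ?_
      rw [happly i, inner_smul_right, inner_self_eq_norm_sq_to_K, hgnorm i]
      simp
    rw [hρtr] at h1
    have h2 := congrArg Complex.re h1.symm
    simpa using h2
  -- Hoelder-type bound via positivity of ρ
  have htr_bound : ∀ S : 𝓗 →ₗ[ℂ] 𝓗,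
      |(LinearMap.trace ℂ 𝓗 (ρ ∘ₗ S)).re| ≤ endOpNorm S := by
    intro S
    rw [htr S]
    rw [Complex.re_sum]
    calc |∑ i, ((p i : ℂ) * ⟪g i, S (g i)⟫).re|
        ≤ ∑ i, |((p i : ℂ) * ⟪g i, S (g i)⟫).re| := Finset.abs_sum_le_sum_abs _ _
      _ ≤ ∑ i, p i * endOpNorm S := by
          refine Finset.sum_le_sum fun i _ => ?_
          rw [Complex.re_ofReal_mul, abs_mul, abs_of_nonneg (hp_nonneg i)]
          refine mul_le_mul_of_nonneg_left ?_ (hp_nonneg i)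
          calc |(⟪g i, S (g i)⟫ : ℂ).re| ≤ ‖(⟪g i, S (g i)⟫ : ℂ)‖ :=
                Complex.abs_re_le_norm _
            _ ≤ endOpNorm S * ‖g i‖ ^ 2 := inner_opNorm S (g i)
            _ = endOpNorm S := by rw [hgnorm i]; ring
      _ = endOpNorm S := by rw [← Finset.sum_mul, hp_sum, one_mul]
  -- positivity of the trace against a positive quadratic form
  have htr_pos : ∀ S : 𝓗 →ₗ[ℂ] 𝓗, (∀ v, 0 ≤ (⟪v, S v⟫ : ℂ).re) →
      0 ≤ (LinearMap.trace ℂ 𝓗 (ρ ∘ₗ S)).re := by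
    intro S hS
    rw [htr S, Complex.re_sum]
    refine Finset.sum_nonneg fun i _ => ?_
    rw [Complex.re_ofReal_mul]
    exact mul_nonneg (hp_nonneg i) (hS (g i))
  -- traces of the rank-one pieces
  have htrP : LinearMap.trace ℂ 𝓗 (ρ ∘ₗ vecProj ψ) = ⟪ψ, ρ ψ⟫ := by
    rw [onb_trace g]
    have h1 : ∀ i, (ρ ∘ₗ vecProj ψ) (g i) = (⟪ψ, g i⟫ : ℂ) • ρ ψ := by
      intro i
      simp [vecProj, LinearMap.smulRight_apply, LinearMap.comp_apply]
    calc ∑ i, ⟪g i, (ρ ∘ₗ vecProj ψ) (g i)⟫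
        = ∑ i, (⟪ψ, g i⟫ : ℂ) * ⟪g i, ρ ψ⟫ := by
          refine Finset.sum_congr rfl fun i _ => ?_
          rw [h1 i, inner_smul_right]
      _ = ⟪ψ, ρ ψ⟫ := g.sum_inner_mul_inner ψ (ρ ψ)
  have hPG : vecProj ψ ∘ₗ G = 0 := by
    ext v
    have h1 : (⟪ψ, G v⟫ : ℂ) = 0 := by
      rw [← hGsym ψ v, hGψ, inner_zero_left]
    simp [vecProj, LinearMap.comp_apply, LinearMap.smulRight_apply, h1]
  -- main quantities
  set t := (LinearMap.trace ℂ 𝓗 (ρ ∘ₗ G')).re with ht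
  set tG := (LinearMap.trace ℂ 𝓗 (ρ ∘ₗ G)).re with htG
  -- step 1 : |t - tG| ≤ δ
  have hstep1 : |t - tG| ≤ δ := by
    have hcomp : ρ ∘ₗ (G' - G) = ρ ∘ₗ G' - ρ ∘ₗ G := LinearMap.comp_sub _ _ _
    have h1 : (LinearMap.trace ℂ 𝓗 (ρ ∘ₗ (G' - G))).re = t - tG := by
      rw [hcomp, map_sub]
      simp [ht, htG, Complex.sub_re]
    have h2 := htr_bound (G' - G)
    rw [h1] at h2
    have h3 : endOpNorm (G' - G) = endOpNorm (G - G') := by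
      rw [show G - G' = -(G' - G) by abel, endOpNorm_neg]
    linarith [h2, happrox, h3.symm.le, h3.le]
  -- step 2 : 1 - ⟪ψ, ρ ψ⟫.re ≤ tG
  have hstep2 : 1 - (⟪ψ, ρ ψ⟫ : ℂ).re ≤ tG := by
    set T := G - LinearMap.id + vecProj ψ with hT
    have hTpos : ∀ v, 0 ≤ (⟪v, T v⟫ : ℂ).re := by
      intro v
      have h1 : (⟪v, T v⟫ : ℂ) = ⟪v, G v⟫ - ⟪v, v⟫ + ⟪v, vecProj ψ v⟫ := by
        simp [hT, inner_sub_right, inner_add_right]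
      have h2 : (⟪v, vecProj ψ v⟫ : ℂ).re = ‖(⟪ψ, v⟫ : ℂ)‖ ^ 2 := by
        rw [show (vecProj ψ) v = (⟪ψ, v⟫ : ℂ) • ψ by simp [vecProj], inner_smul_right]
        rw [show (⟪v, ψ⟫ : ℂ) = (starRingEnd ℂ) ⟪ψ, v⟫ from (inner_conj_symm v ψ).symm]
        rw [RCLike.mul_conj]
        simp [← Complex.ofReal_pow]
      have h3 : (⟪v, v⟫ : ℂ).re = ‖v‖ ^ 2 := by
        rw [inner_self_eq_norm_sq_to_K]; simp [← Complex.ofReal_pow]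
      have h4 := gap_quadform G hGsym ψ hψ hGψ heig hgap v
      rw [h1]
      simp only [Complex.add_re, Complex.sub_re]
      linarith
    have h5 := htr_pos T hTpos
    have hcomp : ρ ∘ₗ T = ρ ∘ₗ G - ρ + ρ ∘ₗ vecProj ψ := by
      rw [hT, LinearMap.comp_add, LinearMap.comp_sub, LinearMap.comp_id]
    rw [hcomp, map_add, map_sub, hρtr, htrP] at h5
    simp only [Complex.add_re, Complex.sub_re, Complex.one_re] at h5
    linarith
  -- step 3 : |tG| ≤ Γ * γ
  have hstep3 : |tG| ≤ (Γ : ℝ) * γ := by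
    set A := ρ - vecProj ψ with hA
    have hAsym : A.IsSymmetric := hρsym.sub (vecProj_isSymmetric ψ)
    have hAG : A ∘ₗ G = ρ ∘ₗ G - vecProj ψ ∘ₗ G := LinearMap.sub_comp _ _ _
    have hAG' : A ∘ₗ G = ρ ∘ₗ G := by rw [hAG, hPG, sub_zero]
    set e := hAsym.eigenvectorBasis rfl with he
    set μ := hAsym.eigenvalues rfl with hμ
    have htrA : LinearMap.trace ℂ 𝓗 (A ∘ₗ G) = ∑ i, (μ i : ℂ) * ⟪e i, G (e i)⟫ := by
      rw [onb_trace e]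
      refine Finset.sum_congr rfl fun i _ => ?_
      rw [LinearMap.comp_apply, ← hAsym (e i) (G (e i)),
        show A (e i) = (μ i : ℂ) • e i from hAsym.apply_eigenvectorBasis rfl i,
        inner_smul_left, Complex.conj_ofReal]
    have henorm : ∀ i, ‖e i‖ = 1 := fun i => e.orthonormal.1 i
    have hbound : |tG| ≤ (∑ i, |μ i|) * endOpNorm G := by
      rw [htG, ← hAG', htrA, Complex.re_sum, Finset.sum_mul]
      calc |∑ i, ((μ i : ℂ) * ⟪e i, G (e i)⟫).re|
          ≤ ∑ i, |((μ i : ℂ) * ⟪e i, G (e i)⟫).re| := Finset.abs_sum_le_sum_abs _ _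
        _ ≤ ∑ i, |μ i| * endOpNorm G := by
            refine Finset.sum_le_sum fun i _ => ?_
            rw [Complex.re_ofReal_mul, abs_mul]
            refine mul_le_mul_of_nonneg_left ?_ (abs_nonneg _)
            calc |(⟪e i, G (e i)⟫ : ℂ).re| ≤ ‖(⟪e i, G (e i)⟫ : ℂ)‖ :=
                  Complex.abs_re_le_norm _
              _ ≤ endOpNorm G * ‖e i‖ ^ 2 := inner_opNorm G (e i)
              _ = endOpNorm G := by rw [henorm i]; ring
    have hsum : ∑ i, |μ i| ≤ γ := by
      have := traceNorm_symmetric rfl A hAsym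
      rw [this] at hclose
      exact hclose
    have hnormG : (0:ℝ) ≤ endOpNorm G := norm_nonneg _
    calc |tG| ≤ (∑ i, |μ i|) * endOpNorm G := hbound
      _ ≤ γ * (Γ : ℝ) := by
          refine mul_le_mul hsum hGnorm hnormG hγ
      _ = (Γ : ℝ) * γ := mul_comm _ _
  -- conclude
  have habs1 := abs_le.mp hstep1
  have habs3 := abs_le.mp hstep3
  constructor
  · linarith [hstep2, habs1.2]
  · linarith [habs1.1, habs3.2]


end AuxiliaryLemmas

end
end

section
/- Let d be a positive natural number, let H₁ and H₂ be Hermitian d×d complex matrices, let t be a real number, let L be a positive natural number, and set τ = t/L. Then ‖exp(−i·(H₁+H₂)·t) − (exp(−i·H₁·τ) · exp(−i·H₂·τ))^L‖ ≤ (t²/(2L)) · ‖H₁·H₂ − H₂·H₁‖, where exp denotes the matrix exponential and ‖·‖ the operator norm. -/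
/-- The operator norm (largest singular value) of a complex square matrix, i.e. the norm of
the induced continuous linear endomorphism of Euclidean space. -/
noncomputable def matOpNorm {d : ℕ} (A : Matrix (Fin d) (Fin d) ℂ) : ℝ :=
  ‖Matrix.toEuclideanCLM (𝕜 := ℂ) A‖

/-!
With `A = -iH₁`, `B = -iH₂` skew-adjoint, all the flows `s ↦ exp (s • X)` involved are unitary,
hence contractive. For one step, `f u = exp ((1 - u)(A + B)) exp (uA) exp (uB)` runs from
`exp (A + B)` to `exp A exp B` and has derivative `exp ((1 - u)(A + B)) [exp (uA), B] exp (uB)`;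
differentiating `v ↦ exp ((u - v)A) B exp (vA)` in the same way bounds `‖[exp (uA), B]‖` by
`u ‖[A, B]‖`, so the one-step error is at most `‖[A, B]‖ / 2`. Applied to `τA, τB` this is
`τ² ‖[A, B]‖ / 2`, and since `‖Uᴸ - Vᴸ‖ ≤ L ‖U - V‖` for contractions the errors of the `L` steps
add up to `t² ‖[A, B]‖ / (2L)`.
-/

open NormedSpace Set

theorem norm_pow_sub_pow_le {R : Type*} [NormedRing R] {u v : R} (hu : ‖u‖ ≤ 1) (hv : ‖v‖ ≤ 1)
    (n : ℕ) : ‖u ^ n - v ^ n‖ ≤ n * ‖u - v‖ := by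
  rcases n with _ | n
  · simp
  induction n with
  | zero => simp
  | succ n ih =>
    have hvn : ‖v ^ (n + 1)‖ ≤ 1 :=
      (norm_pow_le' v n.succ_pos).trans (pow_le_one₀ (norm_nonneg v) hv)
    calc ‖u ^ (n + 2) - v ^ (n + 2)‖
        = ‖u * (u ^ (n + 1) - v ^ (n + 1)) + (u - v) * v ^ (n + 1)‖ := by
          rw [pow_succ' u (n + 1), pow_succ' v (n + 1)]; noncomm_ring
      _ ≤ ‖u‖ * ‖u ^ (n + 1) - v ^ (n + 1)‖ + ‖u - v‖ * ‖v ^ (n + 1)‖ :=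
          (norm_add_le _ _).trans (add_le_add (norm_mul_le _ _) (norm_mul_le _ _))
      _ ≤ 1 * ((n + 1 : ℕ) * ‖u - v‖) + ‖u - v‖ * 1 := by gcongr
      _ = (n + 2 : ℕ) * ‖u - v‖ := by push_cast; ring

theorem norm_sub_le_of_norm_deriv_le_mul {E : Type*} [NormedAddCommGroup E] [NormedSpace ℝ E]
    {f f' : ℝ → E} {K s : ℝ} (hs : 0 ≤ s) (hf : ∀ u ∈ Icc 0 s, HasDerivAt f (f' u) u)
    (hf' : ∀ u ∈ Ico 0 s, ‖f' u‖ ≤ K * u) : ‖f s - f 0‖ ≤ K * s ^ 2 / 2 := by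
  have hB : ∀ u : ℝ, HasDerivAt (fun u => K * u ^ 2 / 2) (K * u) u := fun u =>
    (((hasDerivAt_pow 2 u).const_mul K).div_const 2).congr_deriv (by ring)
  refine image_norm_le_of_norm_deriv_right_le_deriv_boundary (f := fun u => f u - f 0)
    (fun u hu => ((hf u hu).sub_const (f 0)).continuousAt.continuousWithinAt)
    (fun u hu => ((hf u (Ico_subset_Icc_self hu)).sub_const (f 0)).hasDerivWithinAt)
    (by simp) hB hf' ⟨hs, le_rfl⟩

section BanachAlgebra

variable {𝒜 : Type*} [NormedRing 𝒜] [NormedAlgebra ℝ 𝒜] [CompleteSpace 𝒜]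

theorem hasDerivAt_exp_sub_smul (A : 𝒜) (s u : ℝ) :
    HasDerivAt (fun v : ℝ => exp ((s - v) • A)) (-(exp ((s - u) • A) * A)) u := by
  simpa [Function.comp_def] using
    (hasDerivAt_exp_smul_const A (s - u)).scomp u ((hasDerivAt_id u).const_sub s)

theorem norm_exp_smul_mul_sub_mul_exp_smul_le {A : 𝒜}
    (hA : ∀ s : ℝ, 0 ≤ s → ‖exp (s • A)‖ ≤ 1) (B : 𝒜) {s : ℝ} (hs : 0 ≤ s) :
    ‖exp (s • A) * B - B * exp (s • A)‖ ≤ ‖A * B - B * A‖ * s := by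
  have hderiv : ∀ u : ℝ, HasDerivAt (fun v : ℝ => exp ((s - v) • A) * B * exp (v • A))
      (-(exp ((s - u) • A) * (A * B - B * A) * exp (u • A))) u := fun u => by
    refine (((hasDerivAt_exp_sub_smul A s u).mul_const B).mul
      (hasDerivAt_exp_smul_const' A u)).congr_deriv ?_
    noncomm_ring
  have hbound : ∀ u ∈ Ico 0 s, ‖-(exp ((s - u) • A) * (A * B - B * A) * exp (u • A))‖ ≤
      ‖A * B - B * A‖ := fun u hu => by
    rw [norm_neg]
    calc _ ≤ ‖exp ((s - u) • A)‖ * ‖A * B - B * A‖ * ‖exp (u • A)‖ := norm_mul₃_le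
      _ ≤ 1 * ‖A * B - B * A‖ * 1 := by
          gcongr
          exacts [hA _ (sub_nonneg.2 hu.2.le), hA _ hu.1]
      _ = _ := by ring
  simpa [norm_sub_rev] using norm_image_sub_le_of_norm_deriv_le_segment'
    (fun u _ => (hderiv u).hasDerivWithinAt) hbound s ⟨hs, le_rfl⟩

theorem norm_exp_add_sub_exp_mul_exp_le {A B : 𝒜} (hA : ∀ s : ℝ, 0 ≤ s → ‖exp (s • A)‖ ≤ 1)
    (hB : ∀ s : ℝ, 0 ≤ s → ‖exp (s • B)‖ ≤ 1) (hAB : ∀ s : ℝ, 0 ≤ s → ‖exp (s • (A + B))‖ ≤ 1) :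
    ‖exp (A + B) - exp A * exp B‖ ≤ ‖A * B - B * A‖ / 2 := by
  have hderiv : ∀ u : ℝ,
      HasDerivAt (fun v : ℝ => exp ((1 - v) • (A + B)) * exp (v • A) * exp (v • B))
        (exp ((1 - u) • (A + B)) * (exp (u • A) * B - B * exp (u • A)) * exp (u • B)) u :=
    fun u => by
      refine (((hasDerivAt_exp_sub_smul (A + B) 1 u).mul (hasDerivAt_exp_smul_const' A u)).mul
        (hasDerivAt_exp_smul_const' B u)).congr_deriv ?_
      simp only [Pi.mul_apply]
      noncomm_ring
  have hbound : ∀ u ∈ Ico (0 : ℝ) 1,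
      ‖exp ((1 - u) • (A + B)) * (exp (u • A) * B - B * exp (u • A)) * exp (u • B)‖ ≤
        ‖A * B - B * A‖ * u := fun u hu => by
    have hsum := hAB _ (sub_nonneg.2 hu.2.le)
    have hright := hB _ hu.1
    calc _ ≤ ‖exp ((1 - u) • (A + B))‖ * ‖exp (u • A) * B - B * exp (u • A)‖ * ‖exp (u • B)‖ :=
          norm_mul₃_le
      _ ≤ 1 * ‖exp (u • A) * B - B * exp (u • A)‖ * 1 := by gcongr
      _ ≤ _ := by simpa using norm_exp_smul_mul_sub_mul_exp_smul_le hA B hu.1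
  simpa [norm_sub_rev] using norm_sub_le_of_norm_deriv_le_mul zero_le_one
    (fun u _ => hderiv u) hbound

theorem norm_exp_smul_add_sub_pow_le {A B : 𝒜} (hA : ∀ s : ℝ, ‖exp (s • A)‖ ≤ 1)
    (hB : ∀ s : ℝ, ‖exp (s • B)‖ ≤ 1) (hAB : ∀ s : ℝ, ‖exp (s • (A + B))‖ ≤ 1) (t : ℝ) {L : ℕ}
    (hL : 0 < L) :
    ‖exp (t • (A + B)) - (exp ((t / L) • A) * exp ((t / L) • B)) ^ L‖ ≤
      t ^ 2 / (2 * L) * ‖A * B - B * A‖ := by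
  let +nondep : NormedAlgebra ℚ 𝒜 := .restrictScalars ℚ ℝ 𝒜
  set τ := t / L
  have hL' : (L : ℝ) ≠ 0 := by positivity
  have hsplit : t • (A + B) = L • (τ • A + τ • B) := by
    rw [← smul_add, ← Nat.cast_smul_eq_nsmul ℝ, smul_smul, mul_div_cancel₀ t hL']
  have hcomm : τ • A * (τ • B) - τ • B * (τ • A) = τ ^ 2 • (A * B - B * A) := by
    rw [smul_mul_smul_comm, smul_mul_smul_comm, ← smul_sub, sq]
  have hstep := norm_exp_add_sub_exp_mul_exp_le (A := τ • A) (B := τ • B)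
    (fun s _ => smul_smul s τ A ▸ hA _) (fun s _ => smul_smul s τ B ▸ hB _)
    (fun s _ => by rw [← smul_add, smul_smul]; exact hAB _)
  have hprod : ‖exp (τ • A) * exp (τ • B)‖ ≤ 1 :=
    (norm_mul_le _ _).trans (mul_le_one₀ (hA τ) (norm_nonneg _) (hB τ))
  rw [hsplit, exp_nsmul]
  calc _ ≤ L * ‖exp (τ • A + τ • B) - exp (τ • A) * exp (τ • B)‖ :=
        norm_pow_sub_pow_le (smul_add τ A B ▸ hAB τ) hprod L
    _ ≤ L * (‖τ • A * (τ • B) - τ • B * (τ • A)‖ / 2) := by gcongr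
    _ = _ := by
        rw [hcomm, norm_smul, Real.norm_of_nonneg (sq_nonneg τ)]
        simp only [τ]
        field_simp

end BanachAlgebra

theorem norm_exp_le_one_of_mem_skewAdjoint {𝒜 : Type*} [NormedRing 𝒜] [StarRing 𝒜]
    [CStarRing 𝒜] [NormedAlgebra ℚ 𝒜] [CompleteSpace 𝒜] {x : 𝒜} (hx : x ∈ skewAdjoint 𝒜) :
    ‖exp x‖ ≤ 1 := by
  cases subsingleton_or_nontrivial 𝒜
  · simp [Subsingleton.elim (exp x) 0]
  · exact (CStarRing.norm_of_mem_unitary (exp_mem_unitary_of_mem_skewAdjoint hx)).le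

open Complex in
theorem norm_exp_sub_trotter_pow_le_of_isSelfAdjoint {𝒜 : Type*} [CStarAlgebra 𝒜] {a b : 𝒜}
    (ha : IsSelfAdjoint a) (hb : IsSelfAdjoint b) (t : ℝ) {L : ℕ} (hL : 0 < L) :
    ‖exp ((-(I * t)) • (a + b)) -
        (exp ((-(I * ((t / L : ℝ) : ℂ))) • a) * exp ((-(I * ((t / L : ℝ) : ℂ))) • b)) ^ L‖ ≤
      t ^ 2 / (2 * L) * ‖a * b - b * a‖ := by
  let +nondep : NormedAlgebra ℚ 𝒜 := .restrictScalars ℚ ℂ 𝒜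
  have hI : -I ∈ skewAdjoint ℂ := skewAdjoint.mem_iff.2 (by simp)
  have hexp : ∀ {x : 𝒜}, IsSelfAdjoint x → ∀ s : ℝ, ‖exp (s • (-I • x))‖ ≤ 1 := fun hx s =>
    norm_exp_le_one_of_mem_skewAdjoint (skewAdjoint.smul_mem s (hx.smul_mem_skewAdjoint hI))
  have hsmul : ∀ (s : ℝ) (x : 𝒜), (-(I * s)) • x = s • (-I • x) := fun s x => by
    rw [← Complex.coe_smul, smul_smul, mul_neg, mul_comm]
  have hcomm : ‖-I • a * (-I • b) - -I • b * (-I • a)‖ = ‖a * b - b * a‖ := by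
    rw [smul_mul_smul_comm, smul_mul_smul_comm, ← smul_sub, norm_smul]
    simp
  rw [hsmul, hsmul, hsmul, smul_add, ← hcomm]
  exact norm_exp_smul_add_sub_pow_le (hexp ha) (hexp hb) (smul_add (-I) a b ▸ hexp (ha.add hb))
    t hL

theorem first_order_trotter_error_general
    (d : ℕ)
    (H₁ H₂ : Matrix (Fin d) (Fin d) ℂ)
    (h₁ : H₁.IsHermitian) (h₂ : H₂.IsHermitian)
    (t : ℝ) (L : ℕ) (hL : 0 < L) (τ : ℝ) (hτ : τ = t / L) :
    matOpNorm
        (NormedSpace.exp ((-(Complex.I * (t : ℂ))) • (H₁ + H₂)) -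
          (NormedSpace.exp ((-(Complex.I * (τ : ℂ))) • H₁) *
            NormedSpace.exp ((-(Complex.I * (τ : ℂ))) • H₂)) ^ L) ≤
      t ^ 2 / (2 * L) * matOpNorm (H₁ * H₂ - H₂ * H₁) := by
  subst hτ
  -- with the L² operator norm on matrices, `matOpNorm` is definitionally the C⋆-algebra norm
  open scoped Matrix.Norms.L2Operator in
  exact norm_exp_sub_trotter_pow_le_of_isSelfAdjoint h₁.isSelfAdjoint h₂.isSelfAdjoint t hL

theorem first_order_trotter_error
    (d : ℕ) (hd : 0 < d)
    (H₁ H₂ : Matrix (Fin d) (Fin d) ℂ)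
    (h₁ : H₁.IsHermitian) (h₂ : H₂.IsHermitian)
    (t : ℝ) (L : ℕ) (hL : 0 < L) (τ : ℝ) (hτ : τ = t / L) :
    matOpNorm
        (NormedSpace.exp ((-(Complex.I * (t : ℂ))) • (H₁ + H₂)) -
          (NormedSpace.exp ((-(Complex.I * (τ : ℂ))) • H₁) *
            NormedSpace.exp ((-(Complex.I * (τ : ℂ))) • H₂)) ^ L) ≤
      t ^ 2 / (2 * L) * matOpNorm (H₁ * H₂ - H₂ * H₁) :=
  first_order_trotter_error_general d H₁ H₂ h₁ h₂ t L hL τ hτ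
end

section
/- Let d be a positive natural number, let s ≤ t be real numbers, and let L, L' : ℝ → Matrix (Fin d) (Fin d) ℂ be continuous functions taking Hermitian values on [s,t]. Let V, V' : ℝ → Matrix (Fin d) (Fin d) ℂ be differentiable with V(t) = V'(t) = 1, satisfying for all r ∈ [s,t] the differential equations ∂_r V(r) = i·L(r)·V(r) and ∂_r V'(r) = i·L'(r)·V'(r), and such that V(r) and V'(r) are unitary for all r ∈ [s,t]. Then ‖V(s) − V'(s)‖ ≤ ∫_s^t ‖L(r) − L'(r)‖ dr, where ‖·‖ denotes the operator norm. -/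
set_option maxHeartbeats 1000000
set_option synthInstance.maxHeartbeats 400000


open Matrix

lemma norm_toEuclideanCLM_of_unitary {d : ℕ} (hd : 0 < d)
    {U : Matrix (Fin d) (Fin d) ℂ} (hU : Uᴴ * U = 1) :
    ‖Matrix.toEuclideanCLM (𝕜 := ℂ) U‖ = 1 := by
  haveI : Nonempty (Fin d) := ⟨⟨0, hd⟩⟩
  set φ := Matrix.toEuclideanCLM (𝕜 := ℂ) (n := Fin d)
  have hstar : star (φ U) * φ U = 1 := by
    calc star (φ U) * φ U = φ (star U * U) := by rw [_root_.map_mul, map_star]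
      _ = 1 := by rw [Matrix.star_eq_conjTranspose, hU, _root_.map_one]
  have h1 : ‖φ U‖ * ‖φ U‖ = 1 := by
    rw [← CStarRing.norm_star_mul_self, hstar, norm_one]
  nlinarith [norm_nonneg (φ U)]

theorem propagator_distance_le_integral_of_generator_distance
    (d : ℕ) (hd : 0 < d) (s t : ℝ) (hst : s ≤ t)
    (L L' V V' : ℝ → Matrix (Fin d) (Fin d) ℂ)
    (hLcont : ∀ i j, ContinuousOn (fun r => L r i j) (Set.Icc s t))
    (hL'cont : ∀ i j, ContinuousOn (fun r => L' r i j) (Set.Icc s t))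
    (hLherm : ∀ r ∈ Set.Icc s t, (L r).IsHermitian)
    (hL'herm : ∀ r ∈ Set.Icc s t, (L' r).IsHermitian)
    (hVt : V t = 1) (hV't : V' t = 1)
    (hVode : ∀ r ∈ Set.Icc s t, ∀ i j,
      HasDerivAt (fun u => V u i j) ((Complex.I • (L r * V r)) i j) r)
    (hV'ode : ∀ r ∈ Set.Icc s t, ∀ i j,
      HasDerivAt (fun u => V' u i j) ((Complex.I • (L' r * V' r)) i j) r)
    (hVunit : ∀ r ∈ Set.Icc s t, (V r)ᴴ * V r = 1)
    (hV'unit : ∀ r ∈ Set.Icc s t, (V' r)ᴴ * V' r = 1) :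
    matOpNorm (V s - V' s) ≤ ∫ r in s..t, matOpNorm (L r - L' r) := by
  set φ := Matrix.toEuclideanCLM (𝕜 := ℂ) (n := Fin d) with hφdef
  -- the linear map φ viewed as a continuous linear map on the Pi type
  let myL : (Fin d → Fin d → ℂ) →ₗ[ℂ]
      (EuclideanSpace ℂ (Fin d) →L[ℂ] EuclideanSpace ℂ (Fin d)) :=
    { toFun := fun A => φ (Matrix.of A)
      map_add' := fun A B => _root_.map_add φ (Matrix.of A) (Matrix.of B)
      map_smul' := fun c A => _root_.map_smul φ c (Matrix.of A) }
  let ψ : (Fin d → Fin d → ℂ) →L[ℂ]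
      (EuclideanSpace ℂ (Fin d) →L[ℂ] EuclideanSpace ℂ (Fin d)) :=
    ⟨myL, myL.continuous_of_finiteDimensional⟩
  have hψ : ∀ A : Matrix (Fin d) (Fin d) ℂ, ψ A = φ A := fun A => rfl
  -- the key quantities
  set W : ℝ → Fin d → Fin d → ℂ := fun r => (V' r)ᴴ * V r with hWdef
  set D : ℝ → Fin d → Fin d → ℂ :=
    fun r => Complex.I • ((V' r)ᴴ * (L r - L' r) * V r) with hDdef
  have hsmem : s ∈ Set.Icc s t := ⟨le_rfl, hst⟩
  have htmem : t ∈ Set.Icc s t := ⟨hst, le_rfl⟩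
  -- matrix identity for the derivative of W
  have hkey : ∀ r ∈ Set.Icc s t,
      D r = (Complex.I • (L' r * V' r))ᴴ * V r + (V' r)ᴴ * (Complex.I • (L r * V r)) := by
    intro r hr
    have hL'h : (L' r)ᴴ = L' r := (hL'herm r hr)
    simp only [hDdef, Matrix.conjTranspose_smul, Matrix.conjTranspose_mul, hL'h,
      Complex.star_def, Complex.conj_I, Matrix.smul_mul, Matrix.mul_smul, neg_smul,
      Matrix.neg_mul, neg_mul, Matrix.mul_sub, Matrix.sub_mul, smul_sub, Matrix.mul_assoc]
    abel
  -- derivative of each entry of W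
  have hWderiv : ∀ r ∈ Set.Icc s t, ∀ i j,
      HasDerivAt (fun u => W u i j) (D r i j) r := by
    intro r hr i j
    have h1 : HasDerivAt (fun u => W u i j)
        (∑ k, (star ((Complex.I • (L' r * V' r)) k i) * V r k j
          + star (V' r k i) * (Complex.I • (L r * V r)) k j)) r := by
      have : ∀ u, W u i j = ∑ k, star (V' u k i) * V u k j := by
        intro u
        simp [hWdef, Matrix.mul_apply, Matrix.conjTranspose_apply]
      simp only [this]
      exact HasDerivAt.fun_sum fun k _ =>
        ((hV'ode r hr k i).star.mul (hVode r hr k j))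
    convert h1 using 1
    rw [hkey r hr, Matrix.add_apply, Matrix.mul_apply, Matrix.mul_apply,
      ← Finset.sum_add_distrib]
    refine Finset.sum_congr rfl fun k _ => ?_
    rw [Matrix.conjTranspose_apply, Matrix.conjTranspose_apply]
  -- continuity of entries of V and V' on [s,t]
  have hVcont : ∀ i j, ContinuousOn (fun r => V r i j) (Set.Icc s t) :=
    fun i j r hr => ((hVode r hr i j).continuousAt).continuousWithinAt
  have hV'cont : ∀ i j, ContinuousOn (fun r => V' r i j) (Set.Icc s t) :=
    fun i j r hr => ((hV'ode r hr i j).continuousAt).continuousWithinAt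
  -- continuity of entries of D on [s,t]
  have hDcont : ∀ i j, ContinuousOn (fun r => D r i j) (Set.Icc s t) := by
    intro i j
    have : ∀ r, D r i j
        = Complex.I * ∑ k, (∑ l, star (V' r l i) * (L r l k - L' r l k)) * V r k j := by
      intro r
      simp [hDdef, Matrix.smul_apply, Matrix.mul_apply, Matrix.conjTranspose_apply,
        Matrix.sub_apply, smul_eq_mul]
    simp only [this]
    refine continuousOn_const.mul (continuousOn_finset_sum _ fun k _ => ?_)
    refine ContinuousOn.mul (continuousOn_finset_sum _ fun l _ => ?_) (hVcont k j)
    exact ((Complex.continuous_conj.comp_continuousOn (hV'cont l i)).mul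
      ((hLcont l k).sub (hL'cont l k)))
  -- the CLM-valued functions
  set f : ℝ → (EuclideanSpace ℂ (Fin d) →L[ℂ] EuclideanSpace ℂ (Fin d)) :=
    fun r => ψ (W r) with hfdef
  set F : ℝ → (EuclideanSpace ℂ (Fin d) →L[ℂ] EuclideanSpace ℂ (Fin d)) :=
    fun r => ψ (D r) with hFdef
  have hfderiv : ∀ r ∈ Set.Icc s t, HasDerivAt f (F r) r := by
    intro r hr
    have hW : HasDerivAt W (D r) r :=
      hasDerivAt_pi.mpr fun i => hasDerivAt_pi.mpr fun j => hWderiv r hr i j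
    exact ((ψ.restrictScalars ℝ).hasFDerivAt.comp_hasDerivAt r hW)
  have hFcont : ContinuousOn F (Set.Icc s t) := by
    have : ContinuousOn D (Set.Icc s t) :=
      continuousOn_pi.mpr fun i => continuousOn_pi.mpr fun j => hDcont i j
    exact ψ.continuous.comp_continuousOn this
  have hFint : IntervalIntegrable F MeasureTheory.volume s t :=
    (hFcont.mono (Set.uIcc_of_le hst).subset).intervalIntegrable
  -- fundamental theorem of calculus
  have hFTC : ∫ r in s..t, F r = f t - f s := by
    refine intervalIntegral.integral_eq_sub_of_hasDerivAt ?_ hFint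
    intro r hr
    rw [Set.uIcc_of_le hst] at hr
    exact hfderiv r hr
  have hft : f t = 1 := by
    have hWt : W t = (1 : Matrix (Fin d) (Fin d) ℂ) := by
      show (V' t)ᴴ * V t = 1; rw [hVt, hV't]; simp
    rw [hfdef]; simp only [hWt, hψ, _root_.map_one]
  -- unitarity facts
  have hV'sU : ‖φ (V' s)‖ = 1 := norm_toEuclideanCLM_of_unitary hd (hV'unit s hsmem)
  have hV'V'h : V' s * (V' s)ᴴ = 1 := mul_eq_one_comm.mp (hV'unit s hsmem)
  -- factorization
  have hmat : ∀ A : Matrix (Fin d) (Fin d) ℂ, matOpNorm A = ‖φ A‖ := fun A => rfl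
  have hfactor : V s - V' s = V' s * ((V' s)ᴴ * V s - 1) := by
    rw [Matrix.mul_sub, Matrix.mul_one, ← Matrix.mul_assoc, hV'V'h, Matrix.one_mul]
  -- pointwise norm bound ‖F r‖ ≤ matOpNorm (L r - L' r)
  have hFbound : ∀ r ∈ Set.Icc s t, ‖F r‖ ≤ matOpNorm (L r - L' r) := by
    intro r hr
    have h1 : ‖φ ((V' r)ᴴ)‖ = 1 := by
      refine norm_toEuclideanCLM_of_unitary hd ?_
      rw [Matrix.conjTranspose_conjTranspose]
      exact mul_eq_one_comm.mp (hV'unit r hr)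
    have h2 : ‖φ (V r)‖ = 1 := norm_toEuclideanCLM_of_unitary hd (hVunit r hr)
    have : F r = Complex.I • (φ ((V' r)ᴴ) * φ (L r - L' r) * φ (V r)) := by
      rw [hFdef]
      simp only [hψ, hDdef, _root_.map_smul, _root_.map_mul]
    have hns : ‖Complex.I • (φ ((V' r)ᴴ) * φ (L r - L' r) * φ (V r))‖
        = ‖Complex.I‖ * ‖φ ((V' r)ᴴ) * φ (L r - L' r) * φ (V r)‖ :=
      _root_.norm_smul (β := EuclideanSpace ℂ (Fin d) →L[ℂ] EuclideanSpace ℂ (Fin d))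
        Complex.I _
    rw [this, hns, Complex.norm_I, one_mul]
    calc ‖φ ((V' r)ᴴ) * φ (L r - L' r) * φ (V r)‖
        ≤ ‖φ ((V' r)ᴴ) * φ (L r - L' r)‖ * ‖φ (V r)‖ := norm_mul_le _ _
      _ ≤ ‖φ ((V' r)ᴴ)‖ * ‖φ (L r - L' r)‖ * ‖φ (V r)‖ :=
          mul_le_mul_of_nonneg_right (norm_mul_le _ _) (norm_nonneg _)
      _ = matOpNorm (L r - L' r) := by rw [h1, h2, one_mul, mul_one, hmat]
  -- continuity of the RHS integrand
  have hRHScont : ContinuousOn (fun r => matOpNorm (L r - L' r)) (Set.Icc s t) := by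
    have h1 : ContinuousOn (fun r => (fun i j => L r i j - L' r i j : Fin d → Fin d → ℂ))
        (Set.Icc s t) :=
      continuousOn_pi.mpr fun i => continuousOn_pi.mpr fun j =>
        (hLcont i j).sub (hL'cont i j)
    have h2 := (ψ.continuous.comp_continuousOn h1).norm
    have h3 : ∀ r, ψ (fun i j => L r i j - L' r i j) = φ (L r - L' r) := fun r => rfl
    exact h2
  have hRHSint : IntervalIntegrable (fun r => matOpNorm (L r - L' r))
      MeasureTheory.volume s t :=
    (hRHScont.mono (Set.uIcc_of_le hst).subset).intervalIntegrable
  have hnFint : IntervalIntegrable (fun r => ‖F r‖) MeasureTheory.volume s t :=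
    (hFcont.norm.mono (Set.uIcc_of_le hst).subset).intervalIntegrable
  -- put everything together
  calc matOpNorm (V s - V' s)
      = ‖φ (V' s) * (f s - f t)‖ := by
        have hsub : φ ((V' s)ᴴ * V s - 1) = f s - f t := by
          rw [_root_.map_sub, _root_.map_one, hft]
          rfl
        rw [hmat, hfactor, _root_.map_mul, hsub]
    _ ≤ ‖φ (V' s)‖ * ‖f s - f t‖ := norm_mul_le _ _
    _ = ‖f s - f t‖ := by rw [hV'sU, one_mul]
    _ = ‖∫ r in s..t, F r‖ := by rw [hFTC, norm_sub_rev]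
    _ ≤ ∫ r in s..t, ‖F r‖ := intervalIntegral.norm_integral_le_integral_norm hst
    _ ≤ ∫ r in s..t, matOpNorm (L r - L' r) :=
        intervalIntegral.integral_mono_on hst hnFint hRHSint hFbound
end
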